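/- Let n, m, n' and m' be nonnegative integers such that n+m = n'+m', this common sum is even, and |n − n'| is even. Then the partisan chocolate game positions PC(n,m) and PC(n',m') are equivalent (equal as normal-play game values). -/

import Mathlib

universe u

/-- Pre-games (removed from Mathlib; restored with the old meaning). -/
inductive SetTheory.PGame : Type (u + 1)
  | mk : ∀ α β : Type u, (α → SetTheory.PGame) → (β → SetTheory.PGame) → SetTheory.PGame

namespace SetTheory.PGame

/-- Inner recursion on the second game: the pair (x ≤ y, x ⧏ y). -/
def leLFAux (xl xr : Type u) (xL : xl → PGame.{u}) (xR : xr → PGame.{u})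
    (ihL : xl → PGame.{u} → Prop × Prop) (ihR : xr → PGame.{u} → Prop × Prop) :
    PGame.{u} → Prop × Prop
  | mk yl yr yL yR =>
    ((∀ i, (ihL i (mk yl yr yL yR)).2) ∧ ∀ j, (leLFAux xl xr xL xR ihL ihR (yR j)).2,
     (∃ i, (leLFAux xl xr xL xR ihL ihR (yL i)).1) ∨ ∃ j, (ihR j (mk yl yr yL yR)).1)

/-- The pair (x ≤ y, x ⧏ y). -/
def leLF : PGame.{u} → PGame.{u} → Prop × Prop
  | mk xl xr xL xR => leLFAux xl xr xL xR (fun i => leLF (xL i)) (fun j => leLF (xR j))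

/-- `x ≤ y`: no left option of `x` is `≥ y` and no right option of `y` is `≤ x`. -/
def Le (x y : PGame.{u}) : Prop := (leLF x y).1

/-- Equivalence of pre-games: `x ≤ y ∧ y ≤ x`. -/
def Equiv (x y : PGame.{u}) : Prop := Le x y ∧ Le y x

end SetTheory.PGame

open SetTheory

/-- The partisan chocolate game position `PC n m`.
Left options: `PC n' m` with `n' < n` and `n' + m` even, and `PC n m'` with `m' < m` and
`n + m'` even. Right options: the same with "odd" in place of "even". -/
def PC : ℕ → ℕ → SetTheory.PGame
  | n, m =>
    SetTheory.PGame.mk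
      {p : ℕ × ℕ // (p.2 = m ∧ p.1 < n ∧ Even (p.1 + m)) ∨ (p.1 = n ∧ p.2 < m ∧ Even (n + p.2))}
      {p : ℕ × ℕ // (p.2 = m ∧ p.1 < n ∧ Odd (p.1 + m)) ∨ (p.1 = n ∧ p.2 < m ∧ Odd (n + p.2))}
      (fun p => PC p.1.1 p.1.2)
      (fun p => PC p.1.1 p.1.2)
termination_by n m => n + m
decreasing_by
  all_goals rcases p.2 with ⟨h1, h2, -⟩ | ⟨h1, h2, -⟩ <;> omega

/-! Decreasing one coordinate of `(n, m)` is a Left move if it lands on an even sum and a Right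
move otherwise. By a simultaneous induction, even-sum positions are ordered by
`n + m - 2 * (n % 2)` and odd-sum positions by reverse sum: each option on one side is answered
by a move on the other side that lowers the sum by one or two and lands on a comparable position. -/

namespace SetTheory.PGame

instance : LE PGame.{u} := ⟨Le⟩

def LF (x y : PGame.{u}) : Prop := (leLF x y).2

infix:50 " ⧏ " => LF

theorem lf_mk_of_le_left {x : PGame.{u}} {yl yr : Type u} {yL : yl → PGame.{u}}
    {yR : yr → PGame.{u}} (i : yl) (h : x ≤ yL i) : x ⧏ mk yl yr yL yR := by
  cases x
  exact Or.inl ⟨i, h⟩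

theorem mk_lf_of_right_le {y : PGame.{u}} {xl xr : Type u} {xL : xl → PGame.{u}}
    {xR : xr → PGame.{u}} (j : xr) (h : xR j ≤ y) : mk xl xr xL xR ⧏ y := by
  cases y
  exact Or.inr ⟨j, h⟩

theorem mk_le_mk_iff {xl xr yl yr : Type u} {xL : xl → PGame.{u}} {xR : xr → PGame.{u}}
    {yL : yl → PGame.{u}} {yR : yr → PGame.{u}} :
    mk xl xr xL xR ≤ mk yl yr yL yR ↔
      (∀ i, xL i ⧏ mk yl yr yL yR) ∧ ∀ j, mk xl xr xL xR ⧏ yR j :=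
  Iff.rfl

end SetTheory.PGame

open SetTheory PGame

namespace PC

/-- The options of `PC n m`: Left ones are those with `a + b` even, Right ones odd. -/
def IsMove (a b n m : ℕ) : Prop := (b = m ∧ a < n) ∨ (a = n ∧ b < m)

theorem IsMove.add_lt {a b n m : ℕ} (h : IsMove a b n m) : a + b < n + m := by
  unfold IsMove at h; omega

theorem IsMove.mod_two_eq {a b n m : ℕ} (h : IsMove a b n m) (hs : (a + b) % 2 = (n + m) % 2) :
    a % 2 = n % 2 := by
  unfold IsMove at h; omega

theorem exists_isMove_add_two {n m : ℕ} (h : 2 ≤ n ∨ 2 ≤ m) :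
    ∃ a b, IsMove a b n m ∧ a + b + 2 = n + m ∧ a % 2 = n % 2 := by
  unfold IsMove
  rcases le_or_gt 2 n with hn | hn
  · exact ⟨n - 2, m, by omega⟩
  · exact ⟨n, m - 2, by omega⟩

theorem exists_isMove_add_one {n m : ℕ} (h : 1 ≤ n + m) :
    ∃ a b, IsMove a b n m ∧ a + b + 1 = n + m := by
  unfold IsMove
  rcases le_or_gt 1 n with hn | hn
  · exact ⟨n - 1, m, by omega⟩
  · exact ⟨n, m - 1, by omega⟩

theorem exists_isMove_add_one_of_odd {n m : ℕ} (h : (n + m) % 2 = 1) :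
    ∃ a b, IsMove a b n m ∧ a + b + 1 = n + m ∧ a % 2 = 0 := by
  unfold IsMove
  by_cases hn : n % 2 = 1
  · exact ⟨n - 1, m, by omega⟩
  · exact ⟨n, m - 1, by omega⟩

theorem eq_mk (n m : ℕ) : PC n m = mk
    {p : ℕ × ℕ // (p.2 = m ∧ p.1 < n ∧ Even (p.1 + m)) ∨ (p.1 = n ∧ p.2 < m ∧ Even (n + p.2))}
    {p : ℕ × ℕ // (p.2 = m ∧ p.1 < n ∧ Odd (p.1 + m)) ∨ (p.1 = n ∧ p.2 < m ∧ Odd (n + p.2))}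
    (fun p => PC p.1.1 p.1.2) (fun p => PC p.1.1 p.1.2) := by
  rw [PC]

theorem isMove_even_iff {a b n m : ℕ} :
    (IsMove a b n m ∧ (a + b) % 2 = 0) ↔
      (b = m ∧ a < n ∧ Even (a + m)) ∨ (a = n ∧ b < m ∧ Even (n + b)) := by
  simp only [IsMove, Nat.even_iff]
  constructor <;> rintro (⟨rfl, h⟩ | ⟨rfl, h⟩) <;> omega

theorem isMove_odd_iff {a b n m : ℕ} :
    (IsMove a b n m ∧ (a + b) % 2 = 1) ↔
      (b = m ∧ a < n ∧ Odd (a + m)) ∨ (a = n ∧ b < m ∧ Odd (n + b)) := by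
  simp only [IsMove, Nat.odd_iff]
  constructor <;> rintro (⟨rfl, h⟩ | ⟨rfl, h⟩) <;> omega

theorem lf_of_le_left {x : PGame} {a b n m : ℕ} (h : IsMove a b n m) (he : (a + b) % 2 = 0)
    (hx : x ≤ PC a b) : x ⧏ PC n m := by
  rw [eq_mk n m]
  exact lf_mk_of_le_left ⟨(a, b), isMove_even_iff.1 ⟨h, he⟩⟩ hx

theorem lf_of_right_le {y : PGame} {a b n m : ℕ} (h : IsMove a b n m) (ho : (a + b) % 2 = 1)
    (hy : PC a b ≤ y) : PC n m ⧏ y := by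
  rw [eq_mk n m]
  exact mk_lf_of_right_le ⟨(a, b), isMove_odd_iff.1 ⟨h, ho⟩⟩ hy

theorem le_of_forall_lf {n m n' m' : ℕ}
    (hL : ∀ a b, IsMove a b n m → (a + b) % 2 = 0 → PC a b ⧏ PC n' m')
    (hR : ∀ a b, IsMove a b n' m' → (a + b) % 2 = 1 → PC n m ⧏ PC a b) :
    PC n m ≤ PC n' m' := by
  rw [eq_mk n m, eq_mk n' m']
  refine mk_le_mk_iff.2 ⟨fun ⟨(a, b), h⟩ => ?_, fun ⟨(a, b), h⟩ => ?_⟩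
  · obtain ⟨hab, he⟩ := isMove_even_iff.2 h
    exact eq_mk n' m' ▸ hL a b hab he
  · obtain ⟨hab, ho⟩ := isMove_odd_iff.2 h
    exact eq_mk n m ▸ hR a b hab ho

mutual

theorem le_of_even {n m n' m' : ℕ} (he : (n + m) % 2 = 0) (he' : (n' + m') % 2 = 0)
    (hle : n + m + 2 * (n' % 2) ≤ n' + m' + 2 * (n % 2)) : PC n m ≤ PC n' m' := by
  refine le_of_forall_lf (fun a b hab hab2 => ?_) (fun c d hcd hcd2 => ?_)
  · have := hab.mod_two_eq (by omega)
    have := hab.add_lt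
    obtain ⟨a', b', h', hs', hp'⟩ := exists_isMove_add_two (n := n') (m := m') (by omega)
    exact lf_of_le_left h' (by omega) (le_of_even hab2 (by omega) (by omega))
  · have := hcd.add_lt
    rcases le_or_gt (c + d + 1) (n + m) with hcd_le | hcd_gt
    · obtain ⟨a', b', h', hs'⟩ := exists_isMove_add_one (n := n) (m := m) (by omega)
      exact lf_of_right_le h' (by omega) (le_of_odd (by omega) hcd2 (by omega))
    · obtain ⟨a', b', h', hs', hp'⟩ := exists_isMove_add_one_of_odd hcd2
      exact lf_of_le_left h' (by omega) (le_of_even he (by omega) (by omega))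
termination_by n + m + (n' + m')

theorem le_of_odd {n m n' m' : ℕ} (ho : (n + m) % 2 = 1) (ho' : (n' + m') % 2 = 1)
    (hle : n' + m' ≤ n + m) : PC n m ≤ PC n' m' := by
  refine le_of_forall_lf (fun a b hab hab2 => ?_) (fun c d hcd hcd2 => ?_)
  · have := hab.add_lt
    rcases le_or_gt (a + b + 1) (n' + m') with hab_le | hab_gt
    · obtain ⟨a', b', h', hs', hp'⟩ := exists_isMove_add_one_of_odd ho'
      exact lf_of_le_left h' (by omega) (le_of_even hab2 (by omega) (by omega))
    · obtain ⟨a', b', h', hs'⟩ := exists_isMove_add_one (n := a) (m := b) (by omega)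
      exact lf_of_right_le h' (by omega) (le_of_odd (by omega) ho' (by omega))
  · have := hcd.add_lt
    have := hcd.mod_two_eq (by omega)
    obtain ⟨a', b', h', hs', hp'⟩ := exists_isMove_add_two (n := n) (m := m) (by omega)
    exact lf_of_right_le h' (by omega) (le_of_odd (by omega) hcd2 (by omega))
termination_by n + m + (n' + m')

end

end PC

theorem stmt_7 (n m n' m' : ℕ) (hsum : n + m = n' + m') (heven : Even (n + m))
    (hdiff : Even ((n : ℤ) - n')) :
    (PC n m).Equiv (PC n' m') := by
  obtain ⟨k, hk⟩ := heven
  obtain ⟨l, hl⟩ := hdiff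
  exact ⟨PC.le_of_even (by omega) (by omega) (by omega),
    PC.le_of_even (by omega) (by omega) (by omega)⟩
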